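/- arXiv:math/0702342 — 2 statements merged into one kernel-verified Lean document; each statement's English description precedes it below -/
import Mathlib

section
/- Let μ_Θ be a compactly supported probability measure on [0,∞), c > 0, and μ_Γ = μ_Θ ⊠ μ_c. Then the inverse Stieltjes transforms (inverses taken on the negative real axis) satisfy, for z in some interval (0, z₁): m_{μ_Γ}^{-1}( z / (1 − c − c·z·m_{μ_Θ}^{-1}(z)) ) = m_{μ_Θ}^{-1}(z)·(1 − c − c·z·m_{μ_Θ}^{-1}(z)). -/
/-!
Put `w = -m z`, where `m = m_{μ_Θ}⁻¹(z) < 0`. Since `η_μ((-x)⁻¹) = -x · m_μ(x)`, the point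
`(-m)⁻¹` is `η_{μ_Θ}⁻¹(w)`, and for small `z` the bounds `1 - b z ≤ w < 1` put `w - 1` in the
range where the S-transform relation holds. That relation gives
`η_{μ_Γ}⁻¹(w) = η_{μ_Θ}⁻¹(w) / (1 + c (w - 1))`, i.e. `η_{μ_Γ}((-M)⁻¹) = w` with
`M = m (1 - c - c z m)`, which reads `m_{μ_Γ}(M) = z / (1 - c - c z m)`. Both transforms are
strictly monotone, so these identities determine the inverses.
-/

open MeasureTheory Set Filter Topology

noncomputable def stieltjesTransform (μ : Measure ℝ) (x : ℝ) : ℝ := ∫ t, (t - x)⁻¹ ∂μ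

noncomputable def etaTransform (μ : Measure ℝ) (g : ℝ) : ℝ := ∫ t, (1 + g * t)⁻¹ ∂μ

theorem integral_lt_integral_of_ae_le_of_lt_on {α : Type*} [MeasurableSpace α] {μ : Measure α}
    {f g : α → ℝ} {s : Set α} (hf : Integrable f μ) (hg : Integrable g μ)
    (hle : ∀ᵐ t ∂μ, f t ≤ g t) (hlt : ∀ᵐ t ∂μ, t ∈ s → f t < g t) (hs : μ s ≠ 0) :
    ∫ t, f t ∂μ < ∫ t, g t ∂μ := by
  rw [← sub_pos, ← integral_sub hg hf,
    integral_pos_iff_support_of_nonneg_ae (hle.mono fun t ht => sub_nonneg.2 ht) (hg.sub hf)]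
  refine (pos_iff_ne_zero.2 hs).trans_le (measure_mono_ae ?_)
  filter_upwards [hlt] with t ht hts
  exact (sub_pos.2 (ht hts)).ne'

section Transforms

variable {μ : Measure ℝ}

theorem integrable_inv_sub_of_neg [IsFiniteMeasure μ] (h0 : ∀ᵐ t ∂μ, 0 ≤ t) {x : ℝ}
    (hx : x < 0) : Integrable (fun t => (t - x)⁻¹) μ := by
  refine Integrable.mono' (integrable_const (-x)⁻¹)
    (measurable_id.sub_const x).inv.aestronglyMeasurable ?_
  filter_upwards [h0] with t ht
  rw [Real.norm_eq_abs, abs_of_pos (inv_pos.2 (by linarith))]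
  exact inv_anti₀ (by linarith) (by linarith)

theorem integrable_inv_one_add_mul [IsFiniteMeasure μ] (h0 : ∀ᵐ t ∂μ, 0 ≤ t) {g : ℝ}
    (hg : 0 ≤ g) : Integrable (fun t => (1 + g * t)⁻¹) μ := by
  refine Integrable.mono' (integrable_const 1)
    (measurable_const.add (measurable_id.const_mul g)).inv.aestronglyMeasurable ?_
  filter_upwards [h0] with t ht
  have h1 : 1 ≤ 1 + g * t := le_add_of_nonneg_right (mul_nonneg hg ht)
  rw [Real.norm_eq_abs, abs_of_pos (inv_pos.2 (by linarith))]
  exact inv_le_one_of_one_le₀ h1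

theorem stieltjesTransform_strictMonoOn [IsFiniteMeasure μ] [NeZero μ]
    (h0 : ∀ᵐ t ∂μ, 0 ≤ t) : StrictMonoOn (stieltjesTransform μ) (Iio 0) := by
  intro a ha a' ha' haa'
  have hlt : ∀ᵐ t ∂μ, (t - a)⁻¹ < (t - a')⁻¹ := by
    filter_upwards [h0] with t ht
    exact inv_strictAnti₀ (by linarith [mem_Iio.1 ha']) (by linarith)
  exact integral_lt_integral_of_ae_le_of_lt_on (s := univ) (integrable_inv_sub_of_neg h0 ha)
    (integrable_inv_sub_of_neg h0 ha') (hlt.mono fun t ht => ht.le)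
    (hlt.mono fun t ht _ => ht) (Measure.measure_univ_ne_zero.2 (NeZero.ne μ))

theorem etaTransform_strictAntiOn [IsFiniteMeasure μ] (h0 : ∀ᵐ t ∂μ, 0 ≤ t)
    (hμ : μ (Ioi 0) ≠ 0) : StrictAntiOn (etaTransform μ) (Ici 0) := by
  intro g hg g' hg' hgg'
  refine integral_lt_integral_of_ae_le_of_lt_on (s := Ioi 0) (integrable_inv_one_add_mul h0 hg')
    (integrable_inv_one_add_mul h0 hg) ?_ ?_ hμ
  · filter_upwards [h0] with t ht
    exact inv_anti₀ (by nlinarith [mem_Ici.1 hg]) (by nlinarith)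
  · filter_upwards [h0] with t ht htpos
    exact inv_strictAnti₀ (by nlinarith [mem_Ici.1 hg]) (by nlinarith [mem_Ioi.1 htpos])

theorem etaTransform_zero [IsProbabilityMeasure μ] : etaTransform μ 0 = 1 := by
  simp [etaTransform]

theorem etaTransform_inv_neg (μ : Measure ℝ) {x : ℝ} (hx : x ≠ 0) :
    etaTransform μ (-x)⁻¹ = -x * stieltjesTransform μ x := by
  have h : ∀ t, (1 + (-x)⁻¹ * t)⁻¹ = -x * (t - x)⁻¹ := fun t => by
    have : -x ≠ 0 := neg_ne_zero.2 hx
    rw [show 1 + (-x)⁻¹ * t = (t - x) * (-x)⁻¹ by field_simp; ring, mul_inv, inv_inv, mul_comm]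
  simp only [etaTransform, stieltjesTransform, h, integral_const_mul]

theorem eq_inv_neg_of_etaTransform_eq [IsFiniteMeasure μ] (h0 : ∀ᵐ t ∂μ, 0 ≤ t)
    (hμ : μ (Ioi 0) ≠ 0) {g x : ℝ} (hg : 0 ≤ g) (hx : x < 0)
    (h : etaTransform μ g = -x * stieltjesTransform μ x) : g = (-x)⁻¹ :=
  (etaTransform_strictAntiOn h0 hμ).injOn hg (inv_pos.2 (neg_pos.2 hx)).le
    (h.trans (etaTransform_inv_neg μ hx.ne).symm)

theorem stieltjesTransform_eq_of_etaTransform_inv_neg_eq {x w : ℝ} (hx : x ≠ 0)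
    (h : etaTransform μ (-x)⁻¹ = w) : stieltjesTransform μ x = w / -x := by
  rw [etaTransform_inv_neg μ hx] at h
  rw [← h, mul_div_cancel_left₀ _ (neg_ne_zero.2 hx)]

theorem measure_Ioi_ne_zero_of_etaTransform_ne_one [IsProbabilityMeasure μ]
    (h0 : ∀ᵐ t ∂μ, 0 ≤ t) {g : ℝ} (hg : etaTransform μ g ≠ 1) : μ (Ioi 0) ≠ 0 := by
  intro hμ
  refine hg ((integral_congr_ae ?_).trans (etaTransform_zero (μ := μ)))
  filter_upwards [h0, measure_eq_zero_iff_ae_notMem.1 hμ] with t ht htpos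
  simp [le_antisymm (not_lt.1 htpos) ht]

theorem neg_mul_stieltjesTransform_lt_one [IsProbabilityMeasure μ] (h0 : ∀ᵐ t ∂μ, 0 ≤ t)
    (hμ : μ (Ioi 0) ≠ 0) {x : ℝ} (hx : x < 0) : -x * stieltjesTransform μ x < 1 := by
  have hpos : 0 < (-x)⁻¹ := inv_pos.2 (neg_pos.2 hx)
  rw [← etaTransform_inv_neg μ hx.ne, ← etaTransform_zero (μ := μ)]
  exact etaTransform_strictAntiOn h0 hμ self_mem_Ici hpos.le hpos

theorem one_le_sub_mul_stieltjesTransform [IsProbabilityMeasure μ] {b : ℝ}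
    (hb : ∀ᵐ t ∂μ, t ∈ Icc 0 b) {x : ℝ} (hx : x < 0) :
    1 ≤ (b - x) * stieltjesTransform μ x := by
  obtain ⟨t₀, ht₀⟩ := hb.exists
  have hbx : 0 < b - x := by linarith [ht₀.1, ht₀.2]
  have hle : (b - x)⁻¹ ≤ stieltjesTransform μ x := by
    calc (b - x)⁻¹ = ∫ _, (b - x)⁻¹ ∂μ := by simp
      _ ≤ stieltjesTransform μ x := by
        refine integral_mono_ae (integrable_const _)
          (integrable_inv_sub_of_neg (hb.mono fun t ht => ht.1) hx) ?_
        filter_upwards [hb] with t ht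
        exact inv_anti₀ (by linarith [ht.1]) (by linarith [ht.2])
  calc 1 = (b - x) * (b - x)⁻¹ := (mul_inv_cancel₀ hbx.ne').symm
    _ ≤ (b - x) * stieltjesTransform μ x := mul_le_mul_of_nonneg_left hle hbx.le

end Transforms

theorem eq_div_of_sTransform_eq {gΘ gΓ : ℝ → ℝ} {c ε : ℝ}
    (hS : ∀ z ∈ Ioo (-ε) (0 : ℝ),
      -((z + 1) / z) * gΓ (z + 1) = (-((z + 1) / z) * gΘ (z + 1)) * (1 / (1 + c * z)))
    {w : ℝ} (hw0 : w ≠ 0) (hw : w ∈ Ioo (1 - ε) 1) : gΓ w = gΘ w / (1 + c * (w - 1)) := by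
  have h := hS (w - 1) ⟨by linarith [hw.1], by linarith [hw.2]⟩
  rw [sub_add_cancel, mul_assoc] at h
  rw [mul_left_cancel₀ (neg_ne_zero.2 (div_ne_zero hw0 (by linarith [hw.2]))) h, one_div,
    div_eq_mul_inv]

theorem stieltjesTransform_mul_eq_div_of_sTransform_eq {μΘ μΓ : Measure ℝ}
    [IsProbabilityMeasure μΘ] {bΘ c ε : ℝ}
    (hsuppΘ : ∀ᵐ t ∂μΘ, t ∈ Icc 0 bΘ) (hμΘ : μΘ (Ioi 0) ≠ 0) (hc : 0 < c) {gΘ gΓ : ℝ → ℝ}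
    (hgΘ : ∀ w ∈ Ioo (1 - ε) 1, 0 < gΘ w ∧ etaTransform μΘ (gΘ w) = w)
    (hgΓ : ∀ w ∈ Ioo (1 - ε) 1, 0 < gΓ w ∧ etaTransform μΓ (gΓ w) = w)
    (hS : ∀ z ∈ Ioo (-ε) (0 : ℝ),
      -((z + 1) / z) * gΓ (z + 1) = (-((z + 1) / z) * gΘ (z + 1)) * (1 / (1 + c * z)))
    {m z : ℝ} (hm : m < 0) (hz : 0 < z) (hmz : stieltjesTransform μΘ m = z)
    (hbz : bΘ * z < ε) (hcbz : c * bΘ * z < 1 / 2) :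
    1 / 2 < 1 - c - c * z * m ∧
      stieltjesTransform μΓ (m * (1 - c - c * z * m)) = z / (1 - c - c * z * m) := by
  have h0Θ : ∀ᵐ t ∂μΘ, 0 ≤ t := hsuppΘ.mono fun t ht => ht.1
  have hlow : 1 ≤ (bΘ - m) * z := hmz ▸ one_le_sub_mul_stieltjesTransform hsuppΘ hm
  have hw : -m * z ∈ Ioo (1 - ε) 1 :=
    ⟨by linarith, hmz ▸ neg_mul_stieltjesTransform_lt_one h0Θ hμΘ hm⟩
  have hgΘw : gΘ (-m * z) = (-m)⁻¹ :=
    eq_inv_neg_of_etaTransform_eq h0Θ hμΘ (hgΘ _ hw).1.le hm (by rw [(hgΘ _ hw).2, hmz])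
  set D := 1 - c - c * z * m
  have hD : 1 / 2 < D := by nlinarith
  have hgΓw : gΓ (-m * z) = (-(m * D))⁻¹ := by
    rw [eq_div_of_sTransform_eq hS (mul_pos (neg_pos.2 hm) hz).ne' hw, hgΘw,
      show 1 + c * (-m * z - 1) = D by ring, neg_mul_eq_neg_mul, mul_inv, div_eq_mul_inv]
  refine ⟨hD, ?_⟩
  rw [stieltjesTransform_eq_of_etaTransform_inv_neg_eq (by nlinarith) (hgΓw ▸ (hgΓ _ hw).2),
    neg_mul_eq_neg_mul, mul_div_mul_left _ _ (neg_ne_zero.2 hm.ne)]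

theorem stmt15_general (μΘ μΓ : Measure ℝ) [IsProbabilityMeasure μΘ] [IsProbabilityMeasure μΓ]
    (bΘ bΓ : ℝ) (hΘ : μΘ (Set.Icc 0 bΘ)ᶜ = 0) (hΓ : μΓ (Set.Icc 0 bΓ)ᶜ = 0)
    (c : ℝ) (hc : 0 < c)
    (gΘ gΓ : ℝ → ℝ) (ε : ℝ) (hε : 0 < ε)
    (hgΘ : ∀ z ∈ Set.Ioo (1 - ε) 1, 0 < gΘ z ∧ (∫ t, (1 + gΘ z * t)⁻¹ ∂μΘ) = z)
    (hgΓ : ∀ z ∈ Set.Ioo (1 - ε) 1, 0 < gΓ z ∧ (∫ t, (1 + gΓ z * t)⁻¹ ∂μΓ) = z)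
    (hS : ∀ z ∈ Set.Ioo (-ε) (0 : ℝ),
      -((z + 1) / z) * gΓ (z + 1) = (-((z + 1) / z) * gΘ (z + 1)) * (1 / (1 + c * z)))
    (mΘinv mΓinv : ℝ → ℝ) (z₀ : ℝ) (hz₀ : 0 < z₀)
    (hmΘ : ∀ z ∈ Set.Ioo 0 z₀, mΘinv z < 0 ∧ (∫ t, (t - mΘinv z)⁻¹ ∂μΘ) = z)
    (hmΓ : ∀ z ∈ Set.Ioo 0 z₀, mΓinv z < 0 ∧ (∫ t, (t - mΓinv z)⁻¹ ∂μΓ) = z) :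
    ∃ z₁ > 0, ∀ z ∈ Set.Ioo 0 z₁,
      mΓinv (z / (1 - c - c * z * mΘinv z))
        = mΘinv z * (1 - c - c * z * mΘinv z) := by
  have hsuppΘ : ∀ᵐ t ∂μΘ, t ∈ Icc 0 bΘ := ae_iff.2 hΘ
  have h0Θ : ∀ᵐ t ∂μΘ, 0 ≤ t := hsuppΘ.mono fun t ht => ht.1
  have h0Γ : ∀ᵐ t ∂μΓ, 0 ≤ t := (ae_iff.2 hΓ : ∀ᵐ t ∂μΓ, t ∈ Icc 0 bΓ).mono fun t ht => ht.1
  have hμΘ : μΘ (Ioi 0) ≠ 0 := by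
    have hhalf : 1 - ε / 2 ∈ Ioo (1 - ε) 1 := ⟨by linarith, by linarith⟩
    exact measure_Ioi_ne_zero_of_etaTransform_ne_one h0Θ ((hgΘ _ hhalf).2.trans_ne (by linarith))
  obtain ⟨z₁, hz₁, hsmall⟩ : ∃ z₁ > 0, Ioo 0 z₁ ⊆
      {z | z < z₀ / 2 ∧ bΘ * z < ε ∧ c * bΘ * z < 1 / 2} := by
    have hlin : ∀ a : ℝ, Tendsto (a * ·) (𝓝 0) (𝓝 0) := fun a =>
      (continuous_const_mul a).tendsto' 0 0 (mul_zero a)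
    refine mem_nhdsGT_iff_exists_Ioo_subset.1 (nhdsWithin_le_nhds ?_)
    exact (eventually_lt_nhds (half_pos hz₀)).and
      (((hlin bΘ).eventually_lt_const hε).and ((hlin (c * bΘ)).eventually_lt_const one_half_pos))
  refine ⟨z₁, hz₁, fun z hz => ?_⟩
  obtain ⟨hzz₀, hbz, hcbz⟩ := hsmall hz
  obtain ⟨hm, hmz⟩ := hmΘ z ⟨hz.1, by linarith⟩
  obtain ⟨hD, hΓz⟩ := stieltjesTransform_mul_eq_div_of_sTransform_eq hsuppΘ hμΘ hc hgΘ hgΓ hS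
    hm hz.1 hmz hbz hcbz
  set D := 1 - c - c * z * mΘinv z
  obtain ⟨hMΓ, hMΓz⟩ : mΓinv (z / D) < 0 ∧ stieltjesTransform μΓ (mΓinv (z / D)) = z / D :=
    hmΓ _ ⟨div_pos hz.1 (by linarith), (div_lt_iff₀ (by linarith)).2 (by nlinarith)⟩
  exact (stieltjesTransform_strictMonoOn h0Γ).injOn hMΓ (mul_neg_of_neg_of_pos hm (by linarith))
    (hMΓz.trans hΓz.symm)

/-- if `μ_Γ = μ_Θ ⊠ μ_c` (encoded through the multiplicativity
of the S-transform `S_{μ_Γ} = S_{μ_Θ}/(1+cz)` with `S_μ(z) = -((z+1)/z)·η_μ⁻¹(z+1)`),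
then the inverse Stieltjes transforms (inverted on the negative real axis)
satisfy `m_{μ_Γ}⁻¹(z/(1-c-c·z·m_{μ_Θ}⁻¹(z))) = m_{μ_Θ}⁻¹(z)·(1-c-c·z·m_{μ_Θ}⁻¹(z))`
for `z` in some interval `(0, z₁)`. -/
theorem stmt15 (μΘ μΓ : Measure ℝ) [IsProbabilityMeasure μΘ] [IsProbabilityMeasure μΓ]
    (bΘ bΓ : ℝ) (hΘ : μΘ (Set.Icc 0 bΘ)ᶜ = 0) (hΓ : μΓ (Set.Icc 0 bΓ)ᶜ = 0)
    (c : ℝ) (hc : 0 < c)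
    (gΘ gΓ : ℝ → ℝ) (ε : ℝ) (hε : 0 < ε) (hε1 : ε < 1)
    (hgΘ : ∀ z ∈ Set.Ioo (1 - ε) 1, 0 < gΘ z ∧ (∫ t, (1 + gΘ z * t)⁻¹ ∂μΘ) = z)
    (hgΓ : ∀ z ∈ Set.Ioo (1 - ε) 1, 0 < gΓ z ∧ (∫ t, (1 + gΓ z * t)⁻¹ ∂μΓ) = z)
    (hS : ∀ z ∈ Set.Ioo (-ε) (0 : ℝ),
      -((z + 1) / z) * gΓ (z + 1) = (-((z + 1) / z) * gΘ (z + 1)) * (1 / (1 + c * z)))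
    (mΘinv mΓinv : ℝ → ℝ) (z₀ : ℝ) (hz₀ : 0 < z₀)
    (hmΘ : ∀ z ∈ Set.Ioo 0 z₀, mΘinv z < 0 ∧ (∫ t, (t - mΘinv z)⁻¹ ∂μΘ) = z)
    (hmΓ : ∀ z ∈ Set.Ioo 0 z₀, mΓinv z < 0 ∧ (∫ t, (t - mΓinv z)⁻¹ ∂μΓ) = z) :
    ∃ z₁ > 0, ∀ z ∈ Set.Ioo 0 z₁,
      mΓinv (z / (1 - c - c * z * mΘinv z))
        = mΘinv z * (1 - c - c * z * mΘinv z) :=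
  stmt15_general μΘ μΓ bΘ bΓ hΘ hΓ c hc gΘ gΓ ε hε hgΘ hgΓ hS mΘinv mΓinv z₀ hz₀ hmΘ hmΓ
end

section
/- Let μ_Γ, μ_Θ, μ_W be compactly supported probability measures on [0,∞) with μ_Γ = μ_Θ ⊠ μ_c and suppose μ_W satisfies m_{μ_W}^{-1}(z/(1−σ²cz)) = (1−σ²cz)²·m_{μ_Γ}^{-1}(z) + σ²(1−c)(1−σ²cz) on an interval (0, z₁). Then μ_W = (μ_Θ ⊞ δ_{σ²}) ⊠ μ_c; equivalently μ_W ⊠ μ_c = (μ_Γ ⊠ μ_c) ⊞ δ_{σ²}. -/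
/-!
Put `m = m_Θ⁻¹(z)`, `D = 1 - c - czm` and `E = D - σ²cz`. The identity for `μ_W`, evaluated at
`w = z / D`, reads off `m_W⁻¹` at `w / (1 - σ²cw) = z / E`, and substituting
`m_Γ⁻¹(w) = m·D` (that is, `μ_Γ = μ_Θ ⊠ μ_c`) turns its right side into `(m + σ²)·E`.
The only analysis is keeping `w` inside `(0, z₀)` for small `z`: as `μ_Θ` lives on `[0, b]`,
`z = ∫ (t - m)⁻¹ ≥ (b - m)⁻¹`, so `D ≥ 1 - czb`.
-/

open MeasureTheory Set

theorem inv_sub_le_integral_inv_sub (μ : Measure ℝ) [IsProbabilityMeasure μ] {a b m : ℝ}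
    (hsupp : μ (Icc a b)ᶜ = 0) (hm : m < a) :
    (b - m)⁻¹ ≤ ∫ t, (t - m)⁻¹ ∂μ := by
  have hmem : ∀ᵐ t ∂μ, t ∈ Icc a b := ae_iff.mpr hsupp
  have hint : Integrable (fun t => (t - m)⁻¹) μ := by
    refine (integrable_const (a - m)⁻¹).mono' (by fun_prop) ?_
    filter_upwards [hmem] with t ht
    rw [Real.norm_eq_abs, abs_of_pos (inv_pos.mpr (by linarith [ht.1]))]
    exact inv_anti₀ (by linarith) (by linarith [ht.1])
  calc (b - m)⁻¹ = ∫ _, (b - m)⁻¹ ∂μ := by simp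
    _ ≤ ∫ t, (t - m)⁻¹ ∂μ := by
      refine integral_mono_ae (integrable_const _) hint ?_
      filter_upwards [hmem] with t ht
      exact inv_anti₀ (by linarith [ht.1]) (by linarith [ht.2])

theorem inv_stieltjes_identity_of_conv_of_shift {mΓinv mWinv : ℝ → ℝ} {σ c z m D : ℝ}
    (hD : D = 1 - c - c * z * m) (hD0 : D ≠ 0) (hE0 : 1 - c - c * z * (m + σ ^ 2) ≠ 0)
    (hconv : mΓinv (z / D) = m * D)
    (hW : mWinv (z / D / (1 - σ ^ 2 * c * (z / D)))
      = (1 - σ ^ 2 * c * (z / D)) ^ 2 * mΓinv (z / D)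
        + σ ^ 2 * (1 - c) * (1 - σ ^ 2 * c * (z / D))) :
    mWinv (z / (1 - c - c * z * (m + σ ^ 2)))
      = (m + σ ^ 2) * (1 - c - c * z * (m + σ ^ 2)) := by
  set E := 1 - c - c * z * (m + σ ^ 2)
  have hscale : 1 - σ ^ 2 * c * (z / D) = E / D := by
    field_simp
    rw [hD]
    ring
  have hpoint : z / D / (E / D) = z / E := by field_simp
  rw [hscale, hpoint, hconv] at hW
  rw [hW]
  field_simp
  rw [hD]
  ring

theorem stmt18_general (μΘ : Measure ℝ)
    [IsProbabilityMeasure μΘ]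
    (bΘ : ℝ) (hΘsupp : μΘ (Set.Icc 0 bΘ)ᶜ = 0)
    (σ c : ℝ) (hc : 0 < c)
    (mΘinv mΓinv mWinv : ℝ → ℝ) (z₀ : ℝ) (hz₀ : 0 < z₀)
    (hmΘ : ∀ z ∈ Set.Ioo 0 z₀, mΘinv z < 0 ∧ (∫ t, (t - mΘinv z)⁻¹ ∂μΘ) = z)
    (hconv : ∀ z ∈ Set.Ioo 0 z₀,
      mΓinv (z / (1 - c - c * z * mΘinv z)) = mΘinv z * (1 - c - c * z * mΘinv z))
    (hW : ∀ z ∈ Set.Ioo 0 z₀,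
      mWinv (z / (1 - σ ^ 2 * c * z))
        = (1 - σ ^ 2 * c * z) ^ 2 * mΓinv z + σ ^ 2 * (1 - c) * (1 - σ ^ 2 * c * z)) :
    ∃ z₁ > 0, ∀ z ∈ Set.Ioo 0 z₁,
      mWinv (z / (1 - c - c * z * (mΘinv z + σ ^ 2)))
        = (mΘinv z + σ ^ 2) * (1 - c - c * z * (mΘinv z + σ ^ 2)) := by
  set B := max bΘ 0
  have hB : 0 ≤ B := le_max_right _ _
  have hsuppB : μΘ (Icc 0 B)ᶜ = 0 :=
    measure_mono_null (compl_subset_compl.mpr (Icc_subset_Icc_right (le_max_left _ _))) hΘsupp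
  refine ⟨min (z₀ / 2) (1 / (2 * (c * (B + σ ^ 2) + 1))), by positivity, fun z ⟨hz, hz₁⟩ => ?_⟩
  have hzz₀ : z < z₀ / 2 := hz₁.trans_le (min_le_left _ _)
  have hzsmall : z * (2 * (c * (B + σ ^ 2) + 1)) < 1 :=
    (lt_div_iff₀ (by positivity)).mp (hz₁.trans_le (min_le_right _ _))
  have hzIoo : z ∈ Ioo 0 z₀ := ⟨hz, by linarith⟩
  obtain ⟨hm, hint⟩ := hmΘ z hzIoo
  set m := mΘinv z
  have hzB : 1 ≤ z * (B - m) := by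
    have := inv_sub_le_integral_inv_sub μΘ hsuppB hm
    rwa [hint, inv_le_iff_one_le_mul₀ (by linarith)] at this
  have hczB : c ≤ c * (z * (B - m)) := le_mul_of_one_le_right hc.le hzB
  have hczσ : 0 ≤ c * z * σ ^ 2 := by positivity
  set D := 1 - c - c * z * m with hD
  have hDhalf : 1 / 2 < D := by nlinarith
  have hE : 0 < 1 - c - c * z * (m + σ ^ 2) := by nlinarith
  have hw : z / D ∈ Ioo 0 z₀ :=
    ⟨by positivity, by rw [div_lt_iff₀ (by linarith)]; nlinarith⟩
  exact inv_stieltjes_identity_of_conv_of_shift hD (by linarith) hE.ne' (hconv z hzIoo) (hW _ hw)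

/-- if `μ_Γ = μ_Θ ⊠ μ_c` (encoded by the inverse-Stieltjes
identity characterizing multiplicative free convolution with the
Marčenko–Pastur law `μ_c`) and `μ_W` satisfies the identity (4.2), then
`μ_W = (μ_Θ ⊞ δ_{σ²}) ⊠ μ_c`, i.e. the inverse Stieltjes transform of `μ_W`
satisfies the `⊠ μ_c` identity with respect to `m_{μ_Θ}⁻¹ + σ²`, the inverse
Stieltjes transform of `μ_Θ ⊞ δ_{σ²}`. (Equivalently,
`μ_W ⊠ μ_c = (μ_Γ ⊠ μ_c) ⊞ δ_{σ²}`.) -/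
theorem stmt18 (μΘ μΓ μW : Measure ℝ)
    [IsProbabilityMeasure μΘ] [IsProbabilityMeasure μΓ] [IsProbabilityMeasure μW]
    (bΘ bΓ bW : ℝ) (hΘsupp : μΘ (Set.Icc 0 bΘ)ᶜ = 0)
    (hΓsupp : μΓ (Set.Icc 0 bΓ)ᶜ = 0) (hWsupp : μW (Set.Icc 0 bW)ᶜ = 0)
    (σ c : ℝ) (hσ : 0 < σ) (hc : 0 < c)
    (mΘinv mΓinv mWinv : ℝ → ℝ) (z₀ : ℝ) (hz₀ : 0 < z₀)
    (hmΘ : ∀ z ∈ Set.Ioo 0 z₀, mΘinv z < 0 ∧ (∫ t, (t - mΘinv z)⁻¹ ∂μΘ) = z)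
    (hmΓ : ∀ z ∈ Set.Ioo 0 z₀, mΓinv z < 0 ∧ (∫ t, (t - mΓinv z)⁻¹ ∂μΓ) = z)
    (hmW : ∀ z ∈ Set.Ioo 0 z₀, mWinv z < 0 ∧ (∫ t, (t - mWinv z)⁻¹ ∂μW) = z)
    (hconv : ∀ z ∈ Set.Ioo 0 z₀,
      mΓinv (z / (1 - c - c * z * mΘinv z)) = mΘinv z * (1 - c - c * z * mΘinv z))
    (hW : ∀ z ∈ Set.Ioo 0 z₀,
      mWinv (z / (1 - σ ^ 2 * c * z))
        = (1 - σ ^ 2 * c * z) ^ 2 * mΓinv z + σ ^ 2 * (1 - c) * (1 - σ ^ 2 * c * z)) :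
    ∃ z₁ > 0, ∀ z ∈ Set.Ioo 0 z₁,
      mWinv (z / (1 - c - c * z * (mΘinv z + σ ^ 2)))
        = (mΘinv z + σ ^ 2) * (1 - c - c * z * (mΘinv z + σ ^ 2)) :=
  stmt18_general μΘ bΘ hΘsupp σ c hc mΘinv mΓinv mWinv z₀ hz₀ hmΘ hconv hW
end
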